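/- For every s in {1,...,d} and every monomial x_{l_1}...x_{l_{s-1}}x_{j_s} in G(B_t(x_{j_1}...x_{j_{s-1}}x_{j_s})), setting G = supp_t(x_{l_1}...x_{l_{s-1}}x_{j_s}) ∪ [j_s + 1, n], the monomial prime ideal P_{[n]∖G} contains B_t(u) and is a minimal prime of B_t(u). -/

import Mathlib

open Finset MvPolynomial

/-! Common definitions for principal vector-spread Borel ideals
(Crupi–Ficarra–Lax, "Principal vector-spread Borel ideals").

Throughout, `S = K[x_1,…,x_n]` is realized as `MvPolynomial (Fin n) K`, and the
variable `x_p` (1-based position `p ∈ [1,n]`) is `X (p-1)`. -/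

/-- The variable `x_p` of `K[x_1,…,x_n]`, for a 1-based position `p ∈ [1,n]`. -/
noncomputable def xv (K : Type*) [Field K] (n : ℕ) [NeZero n] (p : ℕ) :
    MvPolynomial (Fin n) K := MvPolynomial.X (Fin.ofNat n (p - 1))

/-- The squarefree monomial `x_{i 1} ⋯ x_{i e}` determined by the index function `i`. -/
noncomputable def monOf (K : Type*) [Field K] (n : ℕ) [NeZero n] (e : ℕ) (i : ℕ → ℕ) :
    MvPolynomial (Fin n) K := ∏ r ∈ Finset.Icc 1 e, xv K n (i r)

/-- Index functions of the `t`-spread monomials `x_{i 1} ⋯ x_{i e}` with `i r ≤ J r` for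
all `r = 1,…,e`.  (These monomials form the minimal monomial generating set of the
principal `t`-spread Borel ideal `B_t(x_{J 1} ⋯ x_{J e})`.) -/
def spreadIdx (e : ℕ) (t J : ℕ → ℕ) : Set (ℕ → ℕ) :=
  {i | (∀ r, 1 ≤ r → r ≤ e → 1 ≤ i r ∧ i r ≤ J r) ∧
    (∀ r, 1 ≤ r → r + 1 ≤ e → i r + t r ≤ i (r + 1))}

/-- The principal `t`-spread Borel ideal `B_t(x_{J 1} ⋯ x_{J e})`: the ideal generated by
all `t`-spread monomials `x_{i 1} ⋯ x_{i e}` with `i r ≤ J r` for all `r`. -/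
noncomputable def tBorel (K : Type*) [Field K] (n : ℕ) [NeZero n] (e : ℕ) (t J : ℕ → ℕ) :
    Ideal (MvPolynomial (Fin n) K) :=
  Ideal.span ((fun i => monOf K n e i) '' spreadIdx e t J)

/-- The monomial prime ideal `P_A = (x_p : p ∈ A)`, for a set `A` of 1-based positions. -/
noncomputable def pA (K : Type*) [Field K] (n : ℕ) [NeZero n] (A : Set ℕ) :
    Ideal (MvPolynomial (Fin n) K) := Ideal.span (xv K n '' A)

/-- The `t`-spread support `supp_t(x_{i 1} ⋯ x_{i e}) = ⋃_{s=1}^{e-1} [i s, i s + t s - 1]`. -/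
def tSupp (e : ℕ) (t : ℕ → ℕ) (i : ℕ → ℕ) : Set ℕ :=
  ⋃ s ∈ Finset.Icc 1 (e - 1), Set.Icc (i s) (i s + t s - 1)

/-- The `k`-th symbolic power of a (squarefree monomial) ideal: the intersection of the
`k`-th powers of its minimal primes. -/
noncomputable def symbPow {R : Type*} [CommRing R] (I : Ideal R) (k : ℕ) : Ideal R :=
  ⨅ P ∈ I.minimalPrimes, P ^ k

/-- The Alexander dual `⨅_{v} P_{supp v}` of the squarefree monomial ideal whose minimal
monomial generators are the degree `e` squarefree monomials indexed by `gen`. -/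
noncomputable def alexDualOf (K : Type*) [Field K] (n : ℕ) [NeZero n] (e : ℕ)
    (gen : Set (ℕ → ℕ)) : Ideal (MvPolynomial (Fin n) K) :=
  ⨅ i ∈ gen, pA K n (i '' Set.Icc 1 e)

/-- The height of an ideal: the infimum of the heights of its minimal primes, the height
of a prime being its height in the poset of prime ideals. -/
noncomputable def idealHeight {R : Type*} [CommRing R] (I : Ideal R) : ℕ∞ :=
  ⨅ (p : PrimeSpectrum R) (_ : p.asIdeal ∈ I.minimalPrimes), Order.height p

/-- The depth of the module `M` with respect to the ideal `P`: the supremum of the lengths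
of `M`-regular sequences consisting of elements of `P`. -/
noncomputable def depthWrt (R : Type*) (M : Type*) [CommRing R] [AddCommGroup M]
    [Module R M] (P : Ideal R) : ℕ∞ :=
  ⨆ (k : ℕ) (_ : ∃ x : Fin k → R, (∀ a, x a ∈ P) ∧
    RingTheory.Sequence.IsRegular M (List.ofFn x)), (k : ℕ∞)

/-- The (Krull) dimension of a module `M`: the Krull dimension of `R / ann M`. -/
noncomputable def modKrullDim (R : Type*) (M : Type*) [CommRing R] [AddCommGroup M]
    [Module R M] : WithBot ℕ∞ := ringKrullDim (R ⧸ Module.annihilator R M)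

/-- A module is Cohen–Macaulay (with respect to the ideal `P`, e.g. the graded maximal
ideal) if its depth equals its Krull dimension. -/
def IsCohenMacaulayMod (R : Type*) (M : Type*) [CommRing R] [AddCommGroup M] [Module R M]
    (P : Ideal R) : Prop := (depthWrt R M P : WithBot ℕ∞) = modKrullDim R M

/-- The depth of a local ring: max length of a regular sequence in the maximal ideal. -/
noncomputable def ringDepth (A : Type*) [CommRing A] [IsLocalRing A] : ℕ∞ :=
  depthWrt A A (IsLocalRing.maximalIdeal A)

/-- A local ring is Cohen–Macaulay if its depth equals its Krull dimension. -/
def IsCohenMacaulayLocalRing (A : Type*) [CommRing A] [IsLocalRing A] : Prop :=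
  (ringDepth A : WithBot ℕ∞) = ringKrullDim A

/-- A (commutative Noetherian) ring is Cohen–Macaulay if all its localizations at prime
ideals are Cohen–Macaulay local rings. -/
def IsCohenMacaulayRing (A : Type*) [CommRing A] : Prop :=
  ∀ (P : Ideal A) (hP : P.IsPrime), haveI := hP
    IsCohenMacaulayLocalRing (Localization.AtPrime P)

/-- The analytic spread of `I`: the Krull dimension of `R(I)/m R(I)`, where `R(I)` is the
Rees algebra of `I` and `m` the (graded maximal) ideal. -/
noncomputable def analyticSpread {R : Type*} [CommRing R] (m I : Ideal R) : WithBot ℕ∞ :=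
  ringKrullDim (↥(reesAlgebra I) ⧸ Ideal.map (algebraMap R ↥(reesAlgebra I)) m)

/-- `{p,q}` is an edge of the linear relation graph of the monomial ideal whose minimal
generators are the degree `e` squarefree monomials indexed by `gen` (positions 1-based,
within `[1,n]`). -/
def lrEdge (K : Type*) [Field K] (n : ℕ) [NeZero n] (e : ℕ) (gen : Set (ℕ → ℕ))
    (p q : ℕ) : Prop :=
  1 ≤ p ∧ p ≤ n ∧ 1 ≤ q ∧ q ≤ n ∧ p ≠ q ∧
    ∃ i ∈ gen, ∃ i' ∈ gen, xv K n p * monOf K n e i = xv K n q * monOf K n e i'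

/-- A facet of a simplicial complex: a maximal face. -/
def isFacet (Δ : Set (Finset ℕ)) (F : Finset ℕ) : Prop :=
  F ∈ Δ ∧ ∀ G ∈ Δ, F ⊆ G → F = G

/-- Vertex decomposability of a simplicial complex (faces as finsets of vertices):
either a simplex (including the void complex and `{∅}`), or there is a vertex whose
deletion and link are vertex decomposable and every facet of the deletion is a facet. -/
inductive VDecomp : Set (Finset ℕ) → Prop
  | empty : VDecomp ∅
  | simplex (A : Finset ℕ) : VDecomp {F | F ⊆ A}
  | step (Δ : Set (Finset ℕ)) (v : ℕ) (hv : ∃ F ∈ Δ, v ∈ F)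
      (hdel : VDecomp {F ∈ Δ | v ∉ F})
      (hlink : VDecomp {F | F ∈ Δ ∧ v ∉ F ∧ insert v F ∈ Δ})
      (hfac : ∀ F, isFacet {F ∈ Δ | v ∉ F} F → isFacet Δ F) : VDecomp Δ

/-- The `a`-th layer `J (a+1) / J a` of a filtration of ideals, as an `R`-module. -/
abbrev layerOf {R : Type*} [CommRing R] {r : ℕ} (J : Fin (r + 1) → Ideal R) (a : Fin r) :=
  ↥(J a.succ) ⧸ (Submodule.comap (J a.succ).subtype (J a.castSucc))

/-! Since `B_t(u)` is squarefree, `P_{[n] ∖ G}` is a minimal prime of it exactly when `G`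
contains the support of no generator but `G ∪ {p}` contains one for every `p ∈ [n] ∖ G`.
If a generator `x_{l 1} ⋯ x_{l d}` of `B_t(u)` had all its indices in `G`, then inductively
`l r ≥ i r` for `r ≤ s`, forcing `l s = j s`, which is not in `G`. Conversely, a `p ∉ G` lies in
the gap between two consecutive intervals of `supp_t`; filling that gap with `p` and moving
the later indices of `i` to the right ends of their intervals gives a generator whose only
index outside `G` is `p`. -/

namespace MvPolynomial

variable {σ R : Type*} [CommRing R]

theorem sub_aeval_indicator_X_mem_span_X_image (B : Set σ) (f : MvPolynomial σ R) :
    f - aeval (Bᶜ.indicator X) f ∈ Ideal.span (X '' B : Set (MvPolynomial σ R)) := by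
  induction f using MvPolynomial.induction_on with
  | C a => simp
  | add p q hp hq => simpa only [map_add, add_sub_add_comm] using Ideal.add_mem _ hp hq
  | mul_X p b hp =>
    by_cases hb : b ∈ B
    · simpa [hb] using Ideal.mul_mem_left _ p (Ideal.subset_span (Set.mem_image_of_mem X hb))
    · simpa [hb, ← sub_mul] using Ideal.mul_mem_right (X b) _ hp

theorem ker_aeval_indicator_compl_X (B : Set σ) :
    RingHom.ker (aeval (Bᶜ.indicator X) : MvPolynomial σ R →ₐ[R] MvPolynomial σ R) =
      Ideal.span (X '' B) := by
  refine le_antisymm (fun f hf => ?_) ?_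
  · have h := sub_aeval_indicator_X_mem_span_X_image B f
    rwa [RingHom.mem_ker.1 hf, sub_zero] at h
  · rw [Ideal.span_le]
    rintro _ ⟨b, hb, rfl⟩
    simp [hb]

theorem isPrime_span_X_image [IsDomain R] (B : Set σ) :
    (Ideal.span (X '' B : Set (MvPolynomial σ R))).IsPrime :=
  ker_aeval_indicator_compl_X (R := R) B ▸ RingHom.ker_isPrime _

theorem X_mem_span_X_image_iff [Nontrivial R] {B : Set σ} {c : σ} :
    (X c : MvPolynomial σ R) ∈ Ideal.span (X '' B) ↔ c ∈ B := by
  simp [mem_ideal_span_X_image, support_X, Finsupp.single_apply_eq_zero]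

end MvPolynomial

section MonomialPrimes

variable {K : Type*} [Field K] {n : ℕ} [NeZero n]

theorem pA_eq_span_X_image (A : Set ℕ) :
    pA K n A = Ideal.span (X '' ((fun p => Fin.ofNat n (p - 1)) '' A)) := by
  rw [pA, Set.image_image]
  rfl

theorem pA_isPrime (A : Set ℕ) : (pA K n A).IsPrime := by
  rw [pA_eq_span_X_image]
  exact isPrime_span_X_image _

theorem mem_of_xv_mem_pA {A : Set ℕ} (hA : A ⊆ Set.Icc 1 n) {p : ℕ} (hp : p ∈ Set.Icc 1 n)
    (h : xv K n p ∈ pA K n A) : p ∈ A := by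
  rw [pA_eq_span_X_image, xv, X_mem_span_X_image_iff] at h
  obtain ⟨a, ha, hap⟩ := h
  obtain ⟨ha1, han⟩ := hA ha
  obtain ⟨hp1, hpn⟩ := hp
  have hval := congrArg Fin.val hap
  simp only [Fin.val_ofNat] at hval
  rw [Nat.mod_eq_of_lt (show a - 1 < n by omega), Nat.mod_eq_of_lt (show p - 1 < n by omega)]
    at hval
  rwa [show p = a by omega]

theorem monOf_mem_pA {e : ℕ} {i : ℕ → ℕ} {A : Set ℕ} {r : ℕ} (hr : r ∈ Finset.Icc 1 e)
    (hir : i r ∈ A) : monOf K n e i ∈ pA K n A :=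
  Ideal.mem_of_dvd _ (Finset.dvd_prod_of_mem _ hr) (Ideal.subset_span ⟨i r, hir, rfl⟩)

variable {e : ℕ} {gen : Set (ℕ → ℕ)} {G : Set ℕ}

theorem span_monOf_le_pA_compl (hcover : ∀ i ∈ gen, ∃ r ∈ Finset.Icc 1 e, i r ∉ G)
    (hbound : ∀ i ∈ gen, ∀ r ∈ Finset.Icc 1 e, i r ∈ Set.Icc 1 n) :
    Ideal.span ((fun i => monOf K n e i) '' gen) ≤ pA K n (Set.Icc 1 n \ G) := by
  rw [Ideal.span_le]
  rintro _ ⟨i, hi, rfl⟩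
  obtain ⟨r, hr, hrG⟩ := hcover i hi
  exact monOf_mem_pA hr ⟨hbound i hi r hr, hrG⟩

theorem pA_compl_mem_minimalPrimes (hcover : ∀ i ∈ gen, ∃ r ∈ Finset.Icc 1 e, i r ∉ G)
    (hbound : ∀ i ∈ gen, ∀ r ∈ Finset.Icc 1 e, i r ∈ Set.Icc 1 n)
    (hfacet : ∀ p ∈ Set.Icc 1 n \ G, ∃ i ∈ gen, ∀ r ∈ Finset.Icc 1 e, i r = p ∨ i r ∈ G) :
    pA K n (Set.Icc 1 n \ G) ∈ (Ideal.span ((fun i => monOf K n e i) '' gen)).minimalPrimes := by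
  refine ⟨⟨pA_isPrime _, span_monOf_le_pA_compl hcover hbound⟩, fun q ⟨hq, hgen⟩ hqA => ?_⟩
  rw [pA, Ideal.span_le]
  rintro _ ⟨p, hp, rfl⟩
  obtain ⟨i, hi, hiG⟩ := hfacet p hp
  obtain ⟨r, hr, hxr⟩ :=
    hq.prod_mem_iff.1 (hgen (Ideal.subset_span ⟨i, hi, rfl⟩) : monOf K n e i ∈ q)
  have hrA := mem_of_xv_mem_pA Set.sdiff_subset (hbound i hi r hr) (hqA hxr)
  obtain hrp | hrG := hiG r hr
  · exact hrp ▸ hxr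
  · exact absurd hrG hrA.2

end MonomialPrimes

section SpreadIndices

variable {s d n : ℕ} {t i j : ℕ → ℕ}

theorem mem_tSupp_iff {x : ℕ} :
    x ∈ tSupp s t i ↔ ∃ m, 1 ≤ m ∧ m ≤ s - 1 ∧ i m ≤ x ∧ x ≤ i m + t m - 1 := by
  simp only [tSupp, Set.mem_iUnion, exists_prop, Finset.mem_Icc, Set.mem_Icc, and_assoc]

theorem spreadIdx_add_le {e : ℕ} {J : ℕ → ℕ} (hi : i ∈ spreadIdx e t J) {a b : ℕ}
    (ha : 1 ≤ a) (hab : a < b) (hb : b ≤ e) : i a + t a ≤ i b := by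
  induction b, hab using Nat.le_induction with
  | base => exact hi.2 a ha hb
  | succ b hab ih =>
    have := hi.2 b (by omega) hb
    have := ih (by omega)
    omega

theorem spreadIdx_mono {e : ℕ} {J : ℕ → ℕ} (hi : i ∈ spreadIdx e t J) {a b : ℕ}
    (ha : 1 ≤ a) (hab : a ≤ b) (hb : b ≤ e) : i a ≤ i b := by
  rcases hab.eq_or_lt with rfl | hab
  · rfl
  · have := spreadIdx_add_le hi ha hab hb
    omega

theorem mem_Icc_of_mem_spreadIdx {e : ℕ} {J : ℕ → ℕ} (hJ : ∀ r, 1 ≤ r → r ≤ e → J r ≤ n)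
    (hi : i ∈ spreadIdx e t J) : ∀ r ∈ Finset.Icc 1 e, i r ∈ Set.Icc 1 n := by
  intro r hr
  rw [Finset.mem_Icc] at hr
  exact ⟨(hi.1 r hr.1 hr.2).1, (hi.1 r hr.1 hr.2).2.trans (hJ r hr.1 hr.2)⟩

variable (hi : i ∈ spreadIdx s t j) (his : i s = j s)
include hi his

theorem notMem_tSupp_union_self : j s ∉ tSupp s t i ∪ Set.Icc (j s + 1) n := by
  rintro (hx | hx)
  · obtain ⟨m, hm1, hms, -, hxm⟩ := mem_tSupp_iff.1 hx
    have := spreadIdx_add_le hi hm1 (show m < s by omega) (by omega)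
    have := (hi.1 m hm1 (by omega)).1
    omega
  · exact absurd hx.1 (by omega)

theorem le_of_mem_tSupp_union {x r : ℕ} (hx : x ∈ tSupp s t i ∪ Set.Icc (j s + 1) n)
    (hr1 : 1 ≤ r) (hrs : r ≤ s) (hbelow : ∀ m, 1 ≤ m → m < r → i m + t m ≤ x) : i r ≤ x := by
  rcases hx with hx | hx
  · obtain ⟨m, hm1, hms, hmx, hxm⟩ := mem_tSupp_iff.1 hx
    by_cases hmr : m < r
    · have := hbelow m hm1 hmr
      have := (hi.1 m hm1 (by omega)).1
      omega
    · exact (spreadIdx_mono hi hr1 (by omega) (by omega)).trans hmx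
  · have := spreadIdx_mono hi hr1 hrs le_rfl
    have := hx.1
    omega

theorem exists_notMem_tSupp_union (hs1 : 1 ≤ s) (hsd : s ≤ d) {i' : ℕ → ℕ}
    (hi' : i' ∈ spreadIdx d t j) :
    ∃ r ∈ Finset.Icc 1 d, i' r ∉ tSupp s t i ∪ Set.Icc (j s + 1) n := by
  by_contra! hG
  have hle : ∀ r, 1 ≤ r → r ≤ s → i r ≤ i' r := by
    intro r
    induction r using Nat.strong_induction_on with
    | _ r ih =>
      intro hr1 hrs
      refine le_of_mem_tSupp_union hi his (hG r (Finset.mem_Icc.2 ⟨hr1, by omega⟩)) hr1 hrs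
        fun m hm1 hmr => ?_
      calc i m + t m ≤ i' m + t m := by grw [ih m hmr hm1 (by omega)]
        _ ≤ i' r := spreadIdx_add_le hi' hm1 hmr (by omega)
  have hi's : i' s = j s := le_antisymm (hi'.1 s hs1 hsd).2 (his ▸ hle s hs1 le_rfl)
  exact notMem_tSupp_union_self hi his (hi's ▸ hG s (Finset.mem_Icc.2 ⟨hs1, hsd⟩))

end SpreadIndices

section GapWitness

variable {s d n k p : ℕ} {t i j : ℕ → ℕ}

theorem exists_gap_of_notMem_tSupp (hs1 : 1 ≤ s) (hp : p ∉ tSupp s t i) (hps : p ≤ i s) :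
    ∃ k ≤ s - 1, (1 ≤ k → i k + t k ≤ p) ∧ p ≤ i (k + 1) ∧ (k + 1 < s → p < i (k + 1)) := by
  set k := Nat.findGreatest (fun m => i m + t m ≤ p) (s - 1) with hk
  have hks : k ≤ s - 1 := Nat.findGreatest_le _
  have hlt : k + 1 < s → p < i (k + 1) := fun hk1s => by
    have hgt : ¬ i (k + 1) + t (k + 1) ≤ p :=
      Nat.findGreatest_is_greatest (P := fun m => i m + t m ≤ p) (Nat.lt_succ_self k)
        (show k + 1 ≤ s - 1 by omega)
    by_contra hle
    exact hp (mem_tSupp_iff.2 ⟨k + 1, by omega, by omega, by omega, by omega⟩)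
  refine ⟨k, hks, fun hk1 =>
    Nat.findGreatest_of_ne_zero (P := fun m => i m + t m ≤ p) hk.symm (by omega), ?_, hlt⟩
  rcases Nat.lt_or_ge (k + 1) s with hk1s | hk1s
  · exact (hlt hk1s).le
  · rwa [show k + 1 = s by omega]

def gapWitness (s k p : ℕ) (t i j : ℕ → ℕ) (r : ℕ) : ℕ :=
  if r ≤ k then i r else if r = k + 1 then p else if r ≤ s then i (r - 1) + t (r - 1) - 1
  else j r

theorem gapWitness_mem_spreadIdx (hi : i ∈ spreadIdx s t j) (his : i s = j s) (hs1 : 1 ≤ s)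
    (ht : ∀ k, 1 ≤ k → k ≤ d - 1 → 1 ≤ t k)
    (hjmono : ∀ p q, 1 ≤ p → p < q → q ≤ d → j p < j q)
    (hspread : ∀ k, 1 ≤ k → k ≤ d - 1 → j k + t k ≤ j (k + 1))
    (hk : k ≤ s - 1) (hk1 : 1 ≤ k → i k + t k ≤ p) (hp1 : 1 ≤ p) (hpk : p ≤ i (k + 1))
    (hpk' : k + 1 < s → p < i (k + 1)) :
    gapWitness s k p t i j ∈ spreadIdx d t j := by
  have hib := hi.1
  have hisp (r : ℕ) : 2 ≤ r → r ≤ s → i (r - 1) + t (r - 1) ≤ i r := fun h1 h2 =>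
    spreadIdx_add_le hi (by omega) (by omega) h2
  refine ⟨fun r hr1 hrd => ?_, fun r hr1 hrd => ?_⟩
  · rcases eq_or_ne r (k + 1) with rfl | hrk
    · have := hib (k + 1) hr1 (by omega)
      simp only [gapWitness, if_neg (Nat.not_succ_le_self k), if_true]
      omega
    · have := hib r; have := hib (r - 1); have := hib s; have := hisp r
      have := ht (r - 1); have := hjmono s r
      simp only [gapWitness]
      split_ifs <;> omega
  · obtain h | rfl | rfl | h : r + 1 ≤ k ∨ r = k ∨ r = k + 1 ∨ k + 2 ≤ r := by omega
    · have := hi.2 r hr1 (by omega)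
      simp only [gapWitness, if_pos h, if_pos (show r ≤ k by omega)]
      exact this
    · simp only [gapWitness, le_refl, if_true, if_neg (Nat.not_succ_le_self r)]
      exact hk1 hr1
    · have := hib (k + 1) hr1 (by omega); have := hspread (k + 1) hr1 (by omega)
      simp only [gapWitness, if_neg (Nat.not_succ_le_self k), if_true, Nat.add_sub_cancel]
      split_ifs <;> omega
    · have := hib r; have := hib (r - 1); have := hisp r; have := hspread r
      simp only [gapWitness, Nat.add_sub_cancel]
      split_ifs <;> omega

theorem gapWitness_eq_or_mem (hs1 : 1 ≤ s) (hsd : s ≤ d)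
    (ht : ∀ k, 1 ≤ k → k ≤ d - 1 → 1 ≤ t k)
    (hjmono : ∀ p q, 1 ≤ p → p < q → q ≤ d → j p < j q) (hjn : ∀ r, 1 ≤ r → r ≤ d → j r ≤ n)
    (hk : k ≤ s - 1) {r : ℕ} (hr1 : 1 ≤ r) (hrd : r ≤ d) :
    gapWitness s k p t i j r = p ∨
      gapWitness s k p t i j r ∈ tSupp s t i ∪ Set.Icc (j s + 1) n := by
  unfold gapWitness
  split_ifs with hrk hrk' hrs
  · have := ht r hr1 (by omega)
    exact .inr (.inl (mem_tSupp_iff.2 ⟨r, hr1, by omega, le_rfl, by omega⟩))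
  · exact .inl rfl
  · have := ht (r - 1) (by omega) (by omega)
    exact .inr (.inl (mem_tSupp_iff.2 ⟨r - 1, by omega, by omega, by omega, le_rfl⟩))
  · exact .inr (.inr ⟨hjmono s r (by omega) (by omega) hrd, hjn r hr1 hrd⟩)

end GapWitness

theorem stmt3_general (K : Type*) [Field K] (n d : ℕ) [NeZero n] (t j : ℕ → ℕ)
    (ht : ∀ k, 1 ≤ k → k ≤ d - 1 → 1 ≤ t k)
    (hjmono : ∀ p q, 1 ≤ p → p < q → q ≤ d → j p < j q)
    (hjd : j d = n) (hspread : ∀ k, 1 ≤ k → k ≤ d - 1 → j k + t k ≤ j (k + 1)) :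
    ∀ s, 1 ≤ s → s ≤ d → ∀ i ∈ spreadIdx s t j, i s = j s →
      tBorel K n d t j ≤ pA K n (Set.Icc 1 n \ (tSupp s t i ∪ Set.Icc (j s + 1) n)) ∧
      pA K n (Set.Icc 1 n \ (tSupp s t i ∪ Set.Icc (j s + 1) n))
        ∈ (tBorel K n d t j).minimalPrimes := by
  intro s hs1 hsd i hi his
  have hjn (r : ℕ) (hr1 : 1 ≤ r) (hrd : r ≤ d) : j r ≤ n := by
    rcases hrd.eq_or_lt with rfl | hrd
    exacts [hjd.le, hjd ▸ (hjmono r d hr1 hrd le_rfl).le]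
  have hcover (i' : ℕ → ℕ) (hi' : i' ∈ spreadIdx d t j) :=
    exists_notMem_tSupp_union (n := n) hi his hs1 hsd hi'
  have hbound (i' : ℕ → ℕ) (hi' : i' ∈ spreadIdx d t j) := mem_Icc_of_mem_spreadIdx hjn hi'
  refine ⟨span_monOf_le_pA_compl hcover hbound, pA_compl_mem_minimalPrimes hcover hbound ?_⟩
  rintro p ⟨⟨hp1, hpn⟩, hpG⟩
  have hps : p ≤ i s := his ▸ not_lt.1 fun h => hpG (.inr ⟨h, hpn⟩)
  obtain ⟨k, hk, hk1, hpk, hpk'⟩ := exists_gap_of_notMem_tSupp hs1 (fun h => hpG (.inl h)) hps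
  exact ⟨gapWitness s k p t i j,
    gapWitness_mem_spreadIdx hi his hs1 ht hjmono hspread hk hk1 hp1 hpk hpk',
    fun r hr => gapWitness_eq_or_mem hs1 hsd ht hjmono hjn hk (Finset.mem_Icc.1 hr).1
      (Finset.mem_Icc.1 hr).2⟩

/-- For every `s ∈ {1,…,d}` and every generator `x_{i 1}⋯x_{i (s-1)} x_{j s}` of
`B_t(x_{j 1}⋯x_{j s})` (an index function `i ∈ spreadIdx s t j` with `i s = j s`), setting
`G = supp_t(x_{i 1}⋯x_{i (s-1)} x_{j s}) ∪ [j s + 1, n]`, the monomial prime `P_{[n]∖G}`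
contains `B_t(u)` and is a minimal prime of `B_t(u)`. -/
theorem stmt3 (K : Type*) [Field K] (n d : ℕ) [NeZero n] (t j : ℕ → ℕ)
    (hd : 2 ≤ d) (ht : ∀ k, 1 ≤ k → k ≤ d - 1 → 1 ≤ t k)
    (hj1 : 1 ≤ j 1) (hjmono : ∀ p q, 1 ≤ p → p < q → q ≤ d → j p < j q)
    (hjd : j d = n) (hspread : ∀ k, 1 ≤ k → k ≤ d - 1 → j k + t k ≤ j (k + 1)) :
    ∀ s, 1 ≤ s → s ≤ d → ∀ i ∈ spreadIdx s t j, i s = j s →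
      tBorel K n d t j ≤ pA K n (Set.Icc 1 n \ (tSupp s t i ∪ Set.Icc (j s + 1) n)) ∧
      pA K n (Set.Icc 1 n \ (tSupp s t i ∪ Set.Icc (j s + 1) n))
        ∈ (tBorel K n d t j).minimalPrimes :=
  stmt3_general K n d t j ht hjmono hjd hspread
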